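/- arXiv:1505.03638 — 2 statements merged into one kernel-verified Lean document; each statement's English description precedes it below -/
import Mathlib

section
/- In the affine probabilistic λ-calculus, the one-step reduction relation on finite distributions over programs (reducing one term of the support at each step) is strongly normalizing. -/
noncomputable section
open Classical

/-- Terms of the affine probabilistic λ-calculus (named variables). -/
inductive Tm : Type where
  | var : ℕ → Tm
  | lam : ℕ → Tm → Tm
  | app : Tm → Tm → Tm
  | choice : Tm → Tm → Tm
  | omega : Tm
  deriving DecidableEq

/-- Capture-avoiding substitution of a closed term `V` for variable `x`. -/
def Tm.subst (x : ℕ) (V : Tm) : Tm → Tm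
  | .var y => if y = x then V else .var y
  | .lam y M => if y = x then .lam y M else .lam y (Tm.subst x V M)
  | .app M N => .app (Tm.subst x V M) (Tm.subst x V N)
  | .choice M N => .choice (Tm.subst x V M) (Tm.subst x V N)
  | .omega => .omega

/-- Values are abstractions. -/
def Tm.IsVal : Tm → Prop
  | .lam _ _ => True
  | _ => False

/-- The affine typing judgement `Γ ⊢ M`. -/
inductive Affine : Finset ℕ → Tm → Prop where
  | var {Γ : Finset ℕ} {x : ℕ} : x ∈ Γ → Affine Γ (.var x)
  | lam {Γ : Finset ℕ} {x : ℕ} {M : Tm} : Affine (insert x Γ) M → Affine Γ (.lam x M)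
  | app {Γ Δ : Finset ℕ} {M N : Tm} : Disjoint Γ Δ → Affine Γ M → Affine Δ N →
      Affine (Γ ∪ Δ) (.app M N)
  | choice {Γ : Finset ℕ} {M N : Tm} : Affine Γ M → Affine Γ N → Affine Γ (.choice M N)
  | omega {Γ : Finset ℕ} : Affine Γ .omega

/-- Finite (sub)distributions over terms. -/
abbrev TDist := Tm →₀ ℝ

/-- Big-step evaluation `M ⇓ D`. -/
inductive BigStep : Tm → TDist → Prop where
  | omega : BigStep .omega 0
  | val {x : ℕ} {M : Tm} : BigStep (.lam x M) (Finsupp.single (.lam x M) 1)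
  | choice {M N : Tm} {D E : TDist} : BigStep M D → BigStep N E →
      BigStep (.choice M N) ((1 / 2 : ℝ) • D + (1 / 2 : ℝ) • E)
  | app {M N : Tm} {D E : TDist} {F : Tm → Tm → TDist} {bv : Tm → ℕ} {bd : Tm → Tm} :
      BigStep M D → BigStep N E →
      (∀ f ∈ D.support, f = Tm.lam (bv f) (bd f)) →
      (∀ f ∈ D.support, ∀ v ∈ E.support, BigStep (Tm.subst (bv f) v (bd f)) (F f v)) →
      BigStep (.app M N) (D.sum fun f p => E.sum fun v q => (p * q) • F f v)

/-- The semantics of a term: the (unique) big-step result, if any. -/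
def sem (M : Tm) : TDist := if h : ∃ D, BigStep M D then h.choose else 0

/-- Weight (total mass) of a subdistribution. -/
def wt (D : TDist) : ℝ := D.sum fun _ p => p

/-- Probability that a term accepts a trace (a list of value arguments). -/
def Pr : List Tm → Tm → ℝ
  | [] => fun M => wt (sem M)
  | V :: s => fun M => (sem M).sum fun W p =>
      p * (match W with
           | Tm.lam x body => Pr s (Tm.subst x V body)
           | _ => 0)

/-- The trace distance. -/
def deltaTr (M N : Tm) : ℝ := ⨆ s : List Tm, |Pr s M - Pr s N|

/-- One-step operational semantics of programs. -/
inductive Step : Tm → TDist → Prop where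
  | omega : Step .omega 0
  | choice {M N : Tm} :
      Step (.choice M N)
        ((1 / 2 : ℝ) • Finsupp.single M 1 + (1 / 2 : ℝ) • Finsupp.single N 1)
  | beta {x : ℕ} {M V : Tm} : V.IsVal →
      Step (.app (.lam x M) V) (Finsupp.single (Tm.subst x V M) 1)
  | appL {M N : Tm} {D : TDist} : Step M D →
      Step (.app M N) (D.sum fun L p => p • Finsupp.single (Tm.app L N) 1)
  | appR {V N : Tm} {D : TDist} : V.IsVal → Step N D →
      Step (.app V N) (D.sum fun L p => p • Finsupp.single (Tm.app V L) 1)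

/-- One-step reduction on distributions over programs: a non-value term of the
support is reduced. -/
inductive DStep : TDist → TDist → Prop where
  | mk {D : TDist} {M : Tm} {E : TDist} {α : ℝ} :
      0 < α → M ∉ D.support → ¬ M.IsVal → Step M E →
      DStep (D + α • Finsupp.single M 1) (D + α • E)

/-- Distributions over programs (closed terms). -/
def ProgDist (D : TDist) : Prop := ∀ M ∈ D.support, Affine ∅ M

/-! Give a term of size `s` the weight `3 ^ s`, and a distribution the total weight of its
support. A reduction step replaces one support term `M` by the support of its one-step
reduct, whose weight is strictly smaller than that of `M`: affinity keeps substitution from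
duplicating the argument, so a β-step loses the size of the binder, and the base `3` makes a
choice step pay off since `3 ^ a + 3 ^ b < 3 ^ (1 + max a b)`. The weight is a natural
number, so it cannot decrease forever. -/

def Tm.size : Tm → ℕ
  | .var _ => 1
  | .lam _ M => 1 + M.size
  | .app M N => M.size + N.size
  | .choice M N => 1 + max M.size N.size
  | .omega => 0

namespace Affine

variable {Γ : Finset ℕ} {M : Tm}

theorem subst_eq_self (h : Affine Γ M) {x : ℕ} (hx : x ∉ Γ) (V : Tm) :
    Tm.subst x V M = M := by
  induction h with
  | var hy => exact if_neg (by rintro rfl; exact hx hy)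
  | @lam Γ y M _ ih =>
    by_cases hxy : y = x
    · exact if_pos hxy
    · simp only [Tm.subst, if_neg hxy, ih (by simp [hx, Ne.symm hxy])]
  | app _ _ _ ihM ihN =>
    rw [Finset.mem_union, not_or] at hx
    simp only [Tm.subst, ihM hx.1, ihN hx.2]
  | choice _ _ ihM ihN => simp only [Tm.subst, ihM hx, ihN hx]
  | omega => rfl

theorem size_subst_le (h : Affine Γ M) (x : ℕ) (V : Tm) :
    (Tm.subst x V M).size ≤ M.size + V.size := by
  induction h with
  | var => simp only [Tm.subst]; split <;> simp [Tm.size]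
  | @lam Γ y M _ ih =>
    simp only [Tm.subst]
    split
    · omega
    · simp only [Tm.size]; omega
  | @app Γ Δ M N hdis hM hN ihM ihN =>
    -- `x` occurs in at most one side of the application.
    by_cases hx : x ∈ Γ
    · simp only [Tm.subst, hN.subst_eq_self (Finset.disjoint_left.mp hdis hx), Tm.size]
      omega
    · simp only [Tm.subst, hM.subst_eq_self hx, Tm.size]
      omega
  | choice _ _ ihM ihN => simp only [Tm.subst, Tm.size]; omega
  | omega => simp [Tm.subst, Tm.size]

theorem of_lam {x : ℕ} (h : Affine Γ (.lam x M)) : Affine (insert x Γ) M := by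
  cases h with
  | lam h => exact h

theorem exists_of_app {N : Tm} (h : Affine Γ (.app M N)) :
    (∃ Γ₁, Affine Γ₁ M) ∧ ∃ Γ₂, Affine Γ₂ N := by
  cases h with
  | app _ hM hN => exact ⟨⟨_, hM⟩, ⟨_, hN⟩⟩

end Affine

theorem three_pow_add_three_pow_lt (a b : ℕ) : 3 ^ a + 3 ^ b < 3 ^ (1 + max a b) := by
  have ha : 3 ^ a ≤ 3 ^ max a b := Nat.pow_le_pow_right (by norm_num) (le_max_left a b)
  have hb : 3 ^ b ≤ 3 ^ max a b := Nat.pow_le_pow_right (by norm_num) (le_max_right a b)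
  have hpos : 0 < 3 ^ max a b := by positivity
  rw [pow_add]
  omega

def weight (D : TDist) : ℕ := ∑ M ∈ D.support, 3 ^ M.size

theorem weight_add_le (D E : TDist) : weight (D + E) ≤ weight D + weight E :=
  calc weight (D + E) ≤ ∑ M ∈ D.support ∪ E.support, 3 ^ M.size :=
        Finset.sum_le_sum_of_subset Finsupp.support_add
    _ ≤ _ := by
        rw [weight, weight, ← Finset.sum_union_inter]
        exact Nat.le_add_right _ _

theorem weight_smul_le (α : ℝ) (D : TDist) : weight (α • D) ≤ weight D :=
  Finset.sum_le_sum_of_subset Finsupp.support_smul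

theorem weight_single {M : Tm} {α : ℝ} (hα : α ≠ 0) :
    weight (Finsupp.single M α) = 3 ^ M.size := by
  rw [weight, Finsupp.support_single M hα, Finset.sum_singleton]

theorem weight_add_single {D : TDist} {M : Tm} {α : ℝ} (hM : M ∉ D.support) (hα : α ≠ 0) :
    weight (D + Finsupp.single M α) = weight D + 3 ^ M.size := by
  have hdisj : Disjoint D.support (Finsupp.single M α).support := by
    rwa [Finsupp.support_single M hα, Finset.disjoint_singleton_right]
  rw [weight, Finsupp.support_add_eq hdisj, Finset.sum_union hdisj, ← weight, ← weight,
    weight_single hα]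

theorem weight_sum_smul_single_le (g : Tm → Tm) (D : TDist) :
    weight (D.sum fun L p => p • Finsupp.single (g L) 1) ≤
      ∑ L ∈ D.support, 3 ^ (g L).size := by
  have hmap : (D.sum fun L p => p • Finsupp.single (g L) (1 : ℝ)) = Finsupp.mapDomain g D := by
    simp only [Finsupp.smul_single_one, Finsupp.mapDomain]
  rw [hmap]
  calc weight (Finsupp.mapDomain g D) ≤ ∑ M ∈ D.support.image g, 3 ^ M.size :=
        Finset.sum_le_sum_of_subset Finsupp.mapDomain_support
    _ ≤ _ := Finset.sum_image_le_of_nonneg fun _ _ => Nat.zero_le _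

theorem Step.weight_lt {Γ : Finset ℕ} {M : Tm} {E : TDist} (hs : Step M E) (h : Affine Γ M) :
    weight E < 3 ^ M.size := by
  induction hs generalizing Γ with
  | omega => simp [weight]
  | @choice M N =>
    calc _ ≤ weight ((1 / 2 : ℝ) • Finsupp.single M 1) +
            weight ((1 / 2 : ℝ) • Finsupp.single N 1) := weight_add_le _ _
      _ ≤ 3 ^ M.size + 3 ^ N.size := by
          gcongr <;> exact (weight_smul_le _ _).trans (weight_single one_ne_zero).le
      _ < _ := three_pow_add_three_pow_lt _ _
  | @beta x M V _ =>
    obtain ⟨Γ₁, hlam⟩ := h.exists_of_app.1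
    rw [weight_single one_ne_zero]
    have := hlam.of_lam.size_subst_le x V
    exact Nat.pow_lt_pow_right (by norm_num) (by simp only [Tm.size]; omega)
  | @appL M N D _ ih =>
    obtain ⟨Γ₁, hM⟩ := h.exists_of_app.1
    calc _ ≤ ∑ L ∈ D.support, 3 ^ (Tm.app L N).size := weight_sum_smul_single_le _ D
      _ = weight D * 3 ^ N.size := by simp only [Tm.size, pow_add, weight, Finset.sum_mul]
      _ < 3 ^ M.size * 3 ^ N.size := Nat.mul_lt_mul_of_pos_right (ih hM) (by positivity)
      _ = 3 ^ (Tm.app M N).size := (pow_add _ _ _).symm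
  | @appR V N D _ _ ih =>
    obtain ⟨Γ₂, hN⟩ := h.exists_of_app.2
    calc _ ≤ ∑ L ∈ D.support, 3 ^ (Tm.app V L).size := weight_sum_smul_single_le _ D
      _ = 3 ^ V.size * weight D := by simp only [Tm.size, pow_add, weight, Finset.mul_sum]
      _ < 3 ^ V.size * 3 ^ N.size := Nat.mul_lt_mul_of_pos_left (ih hN) (by positivity)
      _ = 3 ^ (Tm.app V N).size := (pow_add _ _ _).symm

theorem DStep.weight_lt {D E : TDist} (h : DStep D E) (hD : ProgDist D) : weight E < weight D := by
  obtain @⟨D, M, E, α, hα, hM, -, hs⟩ := h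
  rw [Finsupp.smul_single_one] at hD ⊢
  have hMprog : Affine ∅ M := hD M (by simp [Finsupp.notMem_support_iff.mp hM, hα.ne'])
  calc weight (D + α • E) ≤ weight D + weight E :=
        (weight_add_le _ _).trans (Nat.add_le_add_left (weight_smul_le α E) _)
    _ < weight D + 3 ^ M.size := Nat.add_lt_add_left (hs.weight_lt hMprog) _
    _ = weight (D + Finsupp.single M α) := (weight_add_single hM hα.ne').symm

/-- the one-step reduction relation on distributions over programs
is strongly normalising: there is no infinite reduction sequence. -/
theorem dstep_strongly_normalising :
    ¬ ∃ f : ℕ → TDist, (∀ n, ProgDist (f n)) ∧ ∀ n, DStep (f n) (f (n + 1)) := by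
  rintro ⟨f, hprog, hstep⟩
  obtain ⟨n, hn⟩ := WellFounded.not_rel_apply_succ (r := (· < ·)) (weight ∘ f)
  exact hn ((hstep n).weight_lt (hprog n))

end
end

section
/- The context distance is bounded above by the trace distance: δ^ctx(M,N) ≤ δ^tr(M,N) for all programs M, N of the affine probabilistic λ-calculus. -/
noncomputable section
open Classical

/-- Contexts: terms with (at most) a single occurrence of the hole. -/
inductive Ctx : Type where
  | hole : Ctx
  | tm : Tm → Ctx
  | lam : ℕ → Ctx → Ctx
  | appL : Ctx → Tm → Ctx
  | appR : Tm → Ctx → Ctx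
  | choiceL : Ctx → Tm → Ctx
  | choiceR : Tm → Ctx → Ctx
  deriving DecidableEq

/-- Filling the hole of a context with a (closed) term. -/
def Ctx.fill : Ctx → Tm → Tm
  | .hole, M => M
  | .tm N, _ => N
  | .lam x C, M => .lam x (C.fill M)
  | .appL C N, M => .app (C.fill M) N
  | .appR N C, M => .app N (C.fill M)
  | .choiceL C N, M => .choice (C.fill M) N
  | .choiceR N C, M => .choice N (C.fill M)

/-- Affine typing for contexts, akin to the one for terms. -/
inductive CtxAffine : Finset ℕ → Ctx → Prop where
  | hole {Γ : Finset ℕ} : CtxAffine Γ .hole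
  | tm {Γ : Finset ℕ} {N : Tm} : Affine Γ N → CtxAffine Γ (.tm N)
  | lam {Γ : Finset ℕ} {x : ℕ} {C : Ctx} : CtxAffine (insert x Γ) C → CtxAffine Γ (.lam x C)
  | appL {Γ Δ : Finset ℕ} {C : Ctx} {N : Tm} : Disjoint Γ Δ → CtxAffine Γ C → Affine Δ N →
      CtxAffine (Γ ∪ Δ) (.appL C N)
  | appR {Γ Δ : Finset ℕ} {N : Tm} {C : Ctx} : Disjoint Γ Δ → Affine Γ N → CtxAffine Δ C →
      CtxAffine (Γ ∪ Δ) (.appR N C)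
  | choiceL {Γ : Finset ℕ} {C : Ctx} {N : Tm} : CtxAffine Γ C → Affine Γ N →
      CtxAffine Γ (.choiceL C N)
  | choiceR {Γ : Finset ℕ} {N : Tm} {C : Ctx} : Affine Γ N → CtxAffine Γ C →
      CtxAffine Γ (.choiceR N C)

/-- The context distance: suprema of observation differences over affine contexts. -/
def deltaCtx (M N : Tm) : ℝ :=
  ⨆ C : {C : Ctx // CtxAffine ∅ C}, |wt (sem ((C : Ctx).fill M)) - wt (sem ((C : Ctx).fill N))|

/-! ### Auxiliary development -/

/-- Term size, with `choice` measured by the max of its branches. -/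
def tsize : Tm → ℕ
  | .var _ => 1
  | .omega => 1
  | .lam _ M => tsize M + 1
  | .app M N => tsize M + tsize N + 1
  | .choice M N => max (tsize M) (tsize N) + 1

lemma one_le_tsize (M : Tm) : 1 ≤ tsize M := by
  cases M <;> simp [tsize]

/-- Weakening for the affine type system. -/
lemma Affine.weaken {Γ Γ' : Finset ℕ} {M : Tm} (h : Affine Γ M) (hsub : Γ ⊆ Γ') :
    Affine Γ' M := by
  induction h generalizing Γ' with
  | var hx => exact Affine.var (hsub hx)
  | lam _ ih => exact Affine.lam (ih (Finset.insert_subset_insert _ hsub))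
  | app hdis hM hN ihM ihN =>
      rename_i Γ Δ M N
      have h1 : Affine (Γ' \ Δ) M := ihM (by
        intro a ha
        exact Finset.mem_sdiff.2 ⟨hsub (Finset.mem_union_left _ ha),
          fun hb => (Finset.disjoint_left.1 hdis) ha hb⟩)
      have h2 : Γ' \ Δ ∪ Δ = Γ' := by
        apply Finset.sdiff_union_of_subset
        exact fun a ha => hsub (Finset.mem_union_right _ ha)
      have := Affine.app (Finset.sdiff_disjoint) h1 hN
      rwa [h2] at this
  | choice _ _ ih1 ih2 => exact Affine.choice (ih1 hsub) (ih2 hsub)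
  | omega => exact Affine.omega

/-- Substituting for a variable that is not in the context does nothing. -/
lemma subst_id {Γ : Finset ℕ} {M : Tm} (h : Affine Γ M) :
    ∀ x, x ∉ Γ → ∀ V, Tm.subst x V M = M := by
  induction h with
  | @var Γ y hy =>
      intro x hx V
      simp only [Tm.subst]
      rw [if_neg]; rintro rfl; exact hx hy
  | @lam Γ y M _ ih =>
      intro x hx V
      simp only [Tm.subst]
      by_cases hxy : y = x
      · rw [if_pos hxy]
      · rw [if_neg hxy,
          ih x (by simp only [Finset.mem_insert, not_or]; exact ⟨Ne.symm hxy, hx⟩) V]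
  | app hdis hM hN ihM ihN =>
      intro x hx V
      simp only [Tm.subst]
      rw [ihM x (fun hc => hx (Finset.mem_union_left _ hc)) V,
        ihN x (fun hc => hx (Finset.mem_union_right _ hc)) V]
  | choice _ _ ih1 ih2 =>
      intro x hx V
      simp only [Tm.subst]; rw [ih1 x hx V, ih2 x hx V]
  | omega => intro x hx V; rfl

/-- A closed term is unaffected by substitution. -/
lemma subst_closed {M : Tm} (h : Affine ∅ M) (x : ℕ) (V : Tm) :
    Tm.subst x V M = M :=
  subst_id h x (by simp) V

/-- Substitution of a closed term preserves affine typing. -/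
lemma subst_affine {Γ : Finset ℕ} {M : Tm} (h : Affine Γ M) {V : Tm} (hV : Affine ∅ V) :
    ∀ x, Affine (Γ.erase x) (Tm.subst x V M) := by
  induction h with
  | @var Γ y hy =>
      intro x
      simp only [Tm.subst]
      by_cases hyx : y = x
      · rw [if_pos hyx]; exact hV.weaken (Finset.empty_subset _)
      · rw [if_neg hyx]; exact Affine.var (Finset.mem_erase.2 ⟨hyx, hy⟩)
  | @lam Γ y M hM ih =>
      intro x
      simp only [Tm.subst]
      by_cases hyx : y = x
      · rw [if_pos hyx]
        subst hyx
        apply Affine.lam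
        exact hM.weaken (by
          intro a ha
          rcases Finset.mem_insert.1 ha with rfl | ha
          · exact Finset.mem_insert_self _ _
          · by_cases hay : a = y
            · subst hay; exact Finset.mem_insert_self _ _
            · exact Finset.mem_insert_of_mem (Finset.mem_erase.2 ⟨hay, ha⟩))
      · rw [if_neg hyx]
        apply Affine.lam
        exact (ih x).weaken (by
          intro a ha
          rcases Finset.mem_erase.1 ha with ⟨hax, ha⟩
          rcases Finset.mem_insert.1 ha with rfl | ha
          · exact Finset.mem_insert_self _ _
          · exact Finset.mem_insert_of_mem (Finset.mem_erase.2 ⟨hax, ha⟩))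
  | @app Γ Δ M N hdis hM hN ihM ihN =>
      intro x
      simp only [Tm.subst]
      have := Affine.app (Γ := Γ.erase x) (Δ := Δ.erase x)
        (hdis.mono (Finset.erase_subset _ _) (Finset.erase_subset _ _)) (ihM x) (ihN x)
      rwa [← Finset.erase_union_distrib] at this
  | choice _ _ ih1 ih2 =>
      intro x
      simp only [Tm.subst]; exact Affine.choice (ih1 x) (ih2 x)
  | omega => intro x; exact Affine.omega

/-- Size bound on substitution, using affineness. -/
lemma tsize_subst {Γ : Finset ℕ} {M : Tm} (h : Affine Γ M) :
    ∀ x V, tsize (Tm.subst x V M) + 1 ≤ tsize M + tsize V := by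
  induction h with
  | @var Γ y hy =>
      intro x V
      have hV1 := one_le_tsize V
      simp only [Tm.subst]
      by_cases hyx : y = x
      · rw [if_pos hyx]; simp [tsize]
      · rw [if_neg hyx]; simp [tsize]; omega
  | @lam Γ y M hM ih =>
      intro x V
      have hV1 := one_le_tsize V
      simp only [Tm.subst]
      by_cases hyx : y = x
      · rw [if_pos hyx]; simp [tsize]; omega
      · rw [if_neg hyx]
        have := ih x V
        simp only [tsize] at *
        omega
  | @app Γ Δ M N hdis hM hN ihM ihN =>
      intro x V
      have hV1 := one_le_tsize V
      simp only [Tm.subst]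
      by_cases hx : x ∈ Γ
      · have hxd : x ∉ Δ := fun hc => (Finset.disjoint_left.1 hdis) hx hc
        rw [subst_id hN x hxd V]
        have := ihM x V
        simp only [tsize] at *
        omega
      · rw [subst_id hM x hx V]
        have := ihN x V
        simp only [tsize] at *
        omega
  | choice _ _ ih1 ih2 =>
      intro x V
      have h1 := ih1 x V; have h2 := ih2 x V
      simp only [Tm.subst, tsize] at *
      omega
  | omega =>
      intro x V
      have hV1 := one_le_tsize V
      simp only [Tm.subst, tsize]
      omega

/-- Commuting substitutions of closed terms. -/
lemma subst_comm {x y : ℕ} (hxy : x ≠ y) {P V : Tm} (hP : ∀ z W, Tm.subst z W P = P)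
    (hV : ∀ z W, Tm.subst z W V = V) (M : Tm) :
    Tm.subst y V (Tm.subst x P M) = Tm.subst x P (Tm.subst y V M) := by
  induction M with
  | var z =>
      by_cases hzx : z = x
      · subst hzx
        simp [Tm.subst, hxy, Ne.symm hxy, hP]
      · by_cases hzy : z = y
        · subst hzy
          simp [Tm.subst, hzx, hV]
        · simp [Tm.subst, hzx, hzy]
  | lam z M ih =>
      by_cases hzx : z = x
      · subst hzx
        simp [Tm.subst, hxy, Ne.symm hxy]
      · by_cases hzy : z = y
        · subst hzy
          simp [Tm.subst, hzx]
        · simp [Tm.subst, hzx, hzy, ih]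
  | app M N ihM ihN => simp only [Tm.subst]; rw [ihM, ihN]
  | choice M N ihM ihN => simp only [Tm.subst]; rw [ihM, ihN]
  | omega => rfl

/-! ### Linear functionals on finitely supported functions -/

/-- Integration of `k` against a finitely supported (signed) measure, as an additive hom. -/
def lin {β : Type*} (k : β → ℝ) : (β →₀ ℝ) →+ ℝ where
  toFun := fun D => D.sum fun W p => p * k W
  map_zero' := Finsupp.sum_zero_index
  map_add' := fun D E => by
    show (D + E).sum (fun W p => p * k W) = _
    apply Finsupp.sum_add_index'
    · intro a; exact zero_mul _
    · intro a b c; exact add_mul b c (k a)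

lemma lin_apply {β : Type*} (k : β → ℝ) (D : β →₀ ℝ) :
    lin k D = D.sum fun W p => p * k W := rfl

lemma lin_apply' {β : Type*} (k : β → ℝ) (D : β →₀ ℝ) :
    lin k D = ∑ a ∈ D.support, D a * k a := rfl

lemma lin_smul {β : Type*} (k : β → ℝ) (c : ℝ) (D : β →₀ ℝ) :
    lin k (c • D) = c * lin k D := by
  rw [lin_apply, lin_apply, Finsupp.sum_smul_index (by intro a; simp), Finsupp.mul_sum]
  exact Finset.sum_congr rfl (by intro a _; ring)

lemma lin_single {β : Type*} (k : β → ℝ) (a : β) (c : ℝ) :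
    lin k (Finsupp.single a c) = c * k a := by
  rw [lin_apply, Finsupp.sum_single_index]; simp

lemma lin_congr {β : Type*} {k k' : β → ℝ} {D : β →₀ ℝ}
    (h : ∀ a ∈ D.support, k a = k' a) : lin k D = lin k' D := by
  rw [lin_apply', lin_apply']
  exact Finset.sum_congr rfl (fun a ha => by rw [h a ha])

lemma lin_finsupp_sum {β γ : Type*} (k : β → ℝ) (X : γ →₀ ℝ) (g : γ → ℝ → (β →₀ ℝ)) :
    lin k (X.sum g) = X.sum fun a p => lin k (g a p) :=
  map_sum (lin k) _ _

lemma wt_eq_lin (D : TDist) : wt D = lin (fun _ => 1) D := by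
  rw [lin_apply, wt]
  exact Finset.sum_congr rfl (by intro a _; simp)

lemma lin_nonneg {β : Type*} {k : β → ℝ} {D : β →₀ ℝ} (hD : ∀ a, 0 ≤ D a)
    (hk : ∀ a, 0 ≤ k a) : 0 ≤ lin k D := by
  rw [lin_apply']
  exact Finset.sum_nonneg (fun a _ => mul_nonneg (hD a) (hk a))

lemma lin_le_wt {β : Type*} {k : β → ℝ} {D : β →₀ ℝ} (hD : ∀ a, 0 ≤ D a)
    (hk : ∀ a, k a ≤ 1) : lin k D ≤ lin (fun _ => 1) D := by
  rw [lin_apply', lin_apply']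
  apply Finset.sum_le_sum
  intro a _
  calc D a * k a ≤ D a * 1 := mul_le_mul_of_nonneg_left (hk a) (hD a)
  _ = D a * 1 := rfl

lemma wt_nonneg {D : TDist} (hD : ∀ a, 0 ≤ D a) : 0 ≤ wt D := by
  rw [wt, Finsupp.sum]
  exact Finset.sum_nonneg (fun a _ => hD a)

/-! ### Properties of big-step evaluation -/

/-- Canonical bound variable / body extractors. -/
def hv : Tm → ℕ | .lam x _ => x | _ => 0
def hb : Tm → Tm | .lam _ b => b | _ => .omega

lemma bs_supp_val {M : Tm} {D : TDist} (h : BigStep M D) :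
    ∀ V ∈ D.support, V = Tm.lam (hv V) (hb V) := by
  induction h with
  | omega => simp
  | val =>
      intro V hV
      rcases Finset.mem_singleton.1 (Finsupp.support_single_subset hV) with rfl
      rfl
  | choice h1 h2 ih1 ih2 =>
      intro V hV
      rcases Finset.mem_union.1 (Finsupp.support_add hV) with hV | hV
      · exact ih1 _ (Finsupp.support_smul hV)
      · exact ih2 _ (Finsupp.support_smul hV)
  | app h1 h2 hsupp hF ih1 ih2 ihF =>
      intro V hV
      rcases Finset.mem_biUnion.1 (Finsupp.support_sum hV) with ⟨f, hf, hV⟩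
      rcases Finset.mem_biUnion.1 (Finsupp.support_sum hV) with ⟨v, hv', hV⟩
      exact ihF f hf v hv' _ (Finsupp.support_smul hV)

lemma bs_nonneg {M : Tm} {D : TDist} (h : BigStep M D) : ∀ W, 0 ≤ D W := by
  induction h with
  | omega => simp
  | val =>
      intro W
      rw [Finsupp.single_apply]
      split <;> norm_num
  | choice h1 h2 ih1 ih2 =>
      intro W
      simp only [Finsupp.add_apply, Finsupp.smul_apply, smul_eq_mul]
      have := ih1 W; have := ih2 W
      nlinarith
  | app h1 h2 hsupp hF ih1 ih2 ihF =>
      intro W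
      simp only [Finsupp.sum_apply, Finsupp.sum, Finset.sum_apply', Finsupp.smul_apply,
        smul_eq_mul]
      apply Finset.sum_nonneg
      intro f hf
      apply Finset.sum_nonneg
      intro v hv'
      exact mul_nonneg (mul_nonneg (ih1 f) (ih2 v)) (ihF f hf v hv' W)

lemma bs_wt_le_one {M : Tm} {D : TDist} (h : BigStep M D) : wt D ≤ 1 := by
  induction h with
  | omega => simp [wt]
  | val => rw [wt, Finsupp.sum_single_index] <;> simp
  | choice h1 h2 ih1 ih2 =>
      rw [wt_eq_lin, map_add, lin_smul, lin_smul, ← wt_eq_lin, ← wt_eq_lin]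
      linarith
  | @app M N D E F bv bd h1 h2 hsupp hF ih1 ih2 ihF =>
      rw [wt_eq_lin, lin_finsupp_sum]
      have inner : ∀ f p, (lin (fun _ => (1:ℝ))) (E.sum fun v q => (p * q) • F f v)
          = ∑ v ∈ E.support, (p * E v) * wt (F f v) := by
        intro f p
        rw [lin_finsupp_sum, Finsupp.sum]
        exact Finset.sum_congr rfl (fun v _ => by rw [lin_smul, ← wt_eq_lin])
      have step1 : ∑ f ∈ D.support, ∑ v ∈ E.support, (D f * E v) * wt (F f v)
          ≤ ∑ f ∈ D.support, ∑ v ∈ E.support, D f * E v := by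
        apply Finset.sum_le_sum; intro f hf
        apply Finset.sum_le_sum; intro v hv'
        calc D f * E v * wt (F f v) ≤ D f * E v * 1 := by
              apply mul_le_mul_of_nonneg_left (ihF f hf v hv')
              exact mul_nonneg (bs_nonneg h1 f) (bs_nonneg h2 v)
        _ = D f * E v := mul_one _
      have step2 : ∑ f ∈ D.support, ∑ v ∈ E.support, D f * E v = wt D * wt E := by
        rw [wt, wt, Finsupp.sum, Finsupp.sum, Finset.sum_mul]
        exact Finset.sum_congr rfl (fun f _ => by rw [Finset.mul_sum])
      have step3 : wt D * wt E ≤ 1 :=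
        le_trans (mul_le_mul ih1 ih2 (wt_nonneg (bs_nonneg h2))
          (le_trans (wt_nonneg (bs_nonneg h1)) ih1)) (by norm_num)
      calc (D.sum fun f p => lin (fun _ => (1:ℝ)) (E.sum fun v q => (p * q) • F f v))
          = ∑ f ∈ D.support, ∑ v ∈ E.support, (D f * E v) * wt (F f v) := by
            rw [Finsupp.sum]
            exact Finset.sum_congr rfl (fun f _ => inner f (D f))
        _ ≤ ∑ f ∈ D.support, ∑ v ∈ E.support, D f * E v := step1
        _ = wt D * wt E := step2
        _ ≤ 1 := step3

/-- Determinism of big-step evaluation. -/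
lemma bs_det {M : Tm} {D : TDist} (h : BigStep M D) :
    ∀ {E : TDist}, BigStep M E → D = E := by
  induction h with
  | omega => intro E hE; cases hE; rfl
  | val => intro E hE; cases hE; rfl
  | choice h1 h2 ih1 ih2 =>
      intro X hX
      cases hX with
      | choice g1 g2 => rw [ih1 g1, ih2 g2]
  | @app M N D E F bv bd h1 h2 hsupp hF ih1 ih2 ihF =>
      intro X hX
      cases hX with
      | @app _ _ D' E' F' bv' bd' g1 g2 gsupp gF =>
        obtain rfl : D = D' := ih1 g1
        obtain rfl : E = E' := ih2 g2
        apply Finsupp.sum_congr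
        intro f hf
        apply Finsupp.sum_congr
        intro v hv'
        have hfe : Tm.lam (bv f) (bd f) = Tm.lam (bv' f) (bd' f) :=
          (hsupp f hf) ▸ (gsupp f hf)
        have hbv : bv f = bv' f := by injection hfe
        have hbd : bd f = bd' f := by injection hfe
        have := gF f hf v hv'
        rw [← hbv, ← hbd] at this
        rw [ihF f hf v hv' this]

lemma sem_eq {M : Tm} {D : TDist} (h : BigStep M D) : sem M = D := by
  rw [sem, dif_pos ⟨D, h⟩]
  exact bs_det (Exists.choose_spec (⟨D, h⟩ : ∃ D, BigStep M D)) h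

lemma sem_bs {M : Tm} (h : ∃ D, BigStep M D) : BigStep M (sem M) := by
  rcases h with ⟨D, h⟩; rw [sem_eq h]; exact h

lemma sem_lam (x : ℕ) (M : Tm) : sem (.lam x M) = Finsupp.single (.lam x M) 1 :=
  sem_eq BigStep.val

lemma sem_omega : sem .omega = 0 := sem_eq BigStep.omega

lemma sem_nonneg (M : Tm) : ∀ W, 0 ≤ sem M W := by
  by_cases h : ∃ D, BigStep M D
  · exact bs_nonneg (sem_bs h)
  · rw [sem, dif_neg h]; simp

lemma sem_wt_le_one (M : Tm) : wt (sem M) ≤ 1 := by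
  by_cases h : ∃ D, BigStep M D
  · exact bs_wt_le_one (sem_bs h)
  · rw [sem, dif_neg h]; simp [wt]

/-! ### Inversion lemmas -/

lemma affine_var_inv {Γ : Finset ℕ} {y : ℕ} (h : Affine Γ (.var y)) : y ∈ Γ := by
  cases h with | var hy => exact hy

lemma affine_app_inv {Γ : Finset ℕ} {A B : Tm} (h : Affine Γ (.app A B)) :
    ∃ Γ₁ Γ₂, Disjoint Γ₁ Γ₂ ∧ Γ₁ ∪ Γ₂ = Γ ∧ Affine Γ₁ A ∧ Affine Γ₂ B := by
  cases h with | app hdis h1 h2 => exact ⟨_, _, hdis, rfl, h1, h2⟩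

lemma affine_lam_inv {Γ : Finset ℕ} {x : ℕ} {B : Tm} (h : Affine Γ (.lam x B)) :
    Affine (insert x Γ) B := by
  cases h with | lam h => exact h

lemma affine_choice_inv {Γ : Finset ℕ} {A B : Tm} (h : Affine Γ (.choice A B)) :
    Affine Γ A ∧ Affine Γ B := by
  cases h with | choice h1 h2 => exact ⟨h1, h2⟩

/-! ### Totality of evaluation for closed affine terms -/

lemma total_aux : ∀ n, ∀ M : Tm, tsize M ≤ n → Affine ∅ M →
    ∃ D, BigStep M D ∧ ∀ V ∈ D.support, Affine ∅ V ∧ tsize V ≤ tsize M ∧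
      V = Tm.lam (hv V) (hb V) := by
  intro n
  induction n with
  | zero => intro M hM; have := one_le_tsize M; omega
  | succ n ih =>
    intro M hsize haff
    cases M with
    | var y => simpa using affine_var_inv haff
    | omega =>
        refine ⟨0, BigStep.omega, ?_⟩; simp
    | lam y B =>
        refine ⟨Finsupp.single (.lam y B) 1, BigStep.val, ?_⟩
        intro V hV
        rcases Finset.mem_singleton.1 (Finsupp.support_single_subset hV) with rfl
        exact ⟨haff, le_refl _, rfl⟩
    | choice A B =>
        obtain ⟨hA, hB⟩ := affine_choice_inv haff
        simp only [tsize] at hsize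
        obtain ⟨DA, bsA, hDA⟩ := ih A (by omega) hA
        obtain ⟨DB, bsB, hDB⟩ := ih B (by omega) hB
        refine ⟨_, BigStep.choice bsA bsB, ?_⟩
        intro V hV
        rcases Finset.mem_union.1 (Finsupp.support_add hV) with hV | hV
        · obtain ⟨h1, h2, h3⟩ := hDA _ (Finsupp.support_smul hV)
          exact ⟨h1, by simp only [tsize]; omega, h3⟩
        · obtain ⟨h1, h2, h3⟩ := hDB _ (Finsupp.support_smul hV)
          exact ⟨h1, by simp only [tsize]; omega, h3⟩
    | app A B =>
        obtain ⟨Γ₁, Γ₂, hdis, hun, hA', hB'⟩ := affine_app_inv haff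
        rcases Finset.union_eq_empty.1 hun with ⟨rfl, rfl⟩
        simp only [tsize] at hsize
        obtain ⟨DA, bsA, hDA⟩ := ih A (by omega) hA'
        obtain ⟨DB, bsB, hDB⟩ := ih B (by omega) hB'
        -- the application of each result of `A` to each result of `B`
        have hsub : ∀ f ∈ DA.support, ∀ v ∈ DB.support,
            Affine ∅ (Tm.subst (hv f) v (hb f)) ∧
            tsize (Tm.subst (hv f) v (hb f)) + 2 ≤ tsize A + tsize B := by
          intro f hf v hvv
          obtain ⟨haf, hsf, hef⟩ := hDA f hf
          obtain ⟨hav, hsv, _⟩ := hDB v hvv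
          have hbody : Affine {hv f} (hb f) := by
            have := affine_lam_inv (hef ▸ haf)
            simpa using this
          constructor
          · have := subst_affine hbody hav (hv f)
            simpa using this
          · have h1 := tsize_subst hbody (hv f) v
            have h2 : tsize (hb f) + 1 = tsize f := by
              conv_rhs => rw [hef]
              rfl
            omega
        set F : Tm → Tm → TDist := fun f v => sem (Tm.subst (hv f) v (hb f)) with hFdef
        have hFbs : ∀ f ∈ DA.support, ∀ v ∈ DB.support,
            BigStep (Tm.subst (hv f) v (hb f)) (F f v) ∧
            ∀ V ∈ (F f v).support, Affine ∅ V ∧ tsize V ≤ tsize A + tsize B ∧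
              V = Tm.lam (hv V) (hb V) := by
          intro f hf v hvv
          obtain ⟨ha, hs⟩ := hsub f hf v hvv
          obtain ⟨D', bs', hD'⟩ := ih _ (by omega) ha
          have hsem : F f v = D' := by rw [hFdef]; exact sem_eq bs'
          rw [hsem]
          refine ⟨bs', ?_⟩
          intro V hV
          obtain ⟨h1, h2, h3⟩ := hD' V hV
          exact ⟨h1, by omega, h3⟩
        refine ⟨_, BigStep.app bsA bsB (fun f hf => (hDA f hf).2.2)
          (fun f hf v hvv => (hFbs f hf v hvv).1), ?_⟩
        intro V hV
        rcases Finset.mem_biUnion.1 (Finsupp.support_sum hV) with ⟨f, hf, hV⟩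
        rcases Finset.mem_biUnion.1 (Finsupp.support_sum hV) with ⟨v, hvv, hV⟩
        obtain ⟨h1, h2, h3⟩ := (hFbs f hf v hvv).2 V (Finsupp.support_smul hV)
        exact ⟨h1, by simp only [tsize]; omega, h3⟩

/-- Every closed affine term evaluates. -/
lemma total {M : Tm} (h : Affine ∅ M) : BigStep M (sem M) := by
  obtain ⟨D, hD, -⟩ := total_aux (tsize M) M (le_refl _) h
  exact sem_bs ⟨D, hD⟩

/-- Values in the semantics of a closed affine term are closed affine lambdas,
no bigger than the term. -/
lemma sem_supp {M : Tm} (h : Affine ∅ M) :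
    ∀ V ∈ (sem M).support, Affine ∅ V ∧ tsize V ≤ tsize M ∧ V = Tm.lam (hv V) (hb V) := by
  obtain ⟨D, hD, hprops⟩ := total_aux (tsize M) M (le_refl _) h
  rw [sem_eq hD]
  exact hprops

/-! ### The trace kernel -/

/-- The acceptance kernel: `K s W` is the probability that value `W` accepts trace `s`. -/
def K : List Tm → Tm → ℝ
  | [], _ => 1
  | V :: s, .lam x b => Pr s (Tm.subst x V b)
  | _ :: _, _ => 0

lemma Pr_eq_lin (s : List Tm) (M : Tm) : Pr s M = lin (K s) (sem M) := by
  cases s with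
  | nil =>
      show wt (sem M) = _
      rw [wt_eq_lin]
      exact lin_congr (fun a _ => rfl)
  | cons V s =>
      show ((sem M).sum fun W p => p * _) = _
      rw [lin_apply]
      apply Finsupp.sum_congr
      intro W _
      congr 1
      cases W <;> rfl

lemma K_lam (V : List Tm → Tm → ℝ := K) : True := trivial

lemma K_cons_lam (V : Tm) (s : List Tm) (x : ℕ) (b : Tm) :
    K (V :: s) (.lam x b) = Pr s (Tm.subst x V b) := rfl

/-- `Pr` at a λ-abstraction. -/
lemma Pr_lam_nil (x : ℕ) (b : Tm) : Pr [] (.lam x b) = 1 := by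
  rw [Pr_eq_lin, sem_lam, lin_single]; simp [K]

lemma Pr_lam_cons (V : Tm) (s : List Tm) (x : ℕ) (b : Tm) :
    Pr (V :: s) (.lam x b) = Pr s (Tm.subst x V b) := by
  rw [Pr_eq_lin, sem_lam, lin_single, K_cons_lam]; ring

lemma Pr_omega (s : List Tm) : Pr s .omega = 0 := by
  rw [Pr_eq_lin, sem_omega, map_zero]

/-- `Pr` for a value `W` in the support of some semantics equals the kernel. -/
lemma Pr_val {W : Tm} (hW : W = Tm.lam (hv W) (hb W)) (s : List Tm) :
    Pr s W = K s W := by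
  conv_lhs => rw [hW]
  rw [Pr_eq_lin, sem_lam, lin_single, ← hW]; ring

/-- Bounds for the kernel and for `Pr`. -/
lemma K_bounds : ∀ s : List Tm, ∀ W, 0 ≤ K s W ∧ K s W ≤ 1 := by
  intro s
  induction s with
  | nil => intro W; simp [K]
  | cons V s ih =>
      intro W
      have hPr : ∀ M : Tm, 0 ≤ Pr s M ∧ Pr s M ≤ 1 := by
        intro M
        rw [Pr_eq_lin]
        constructor
        · exact lin_nonneg (sem_nonneg M) (fun a => (ih a).1)
        · calc lin (K s) (sem M) ≤ lin (fun _ => 1) (sem M) :=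
                lin_le_wt (sem_nonneg M) (fun a => (ih a).2)
          _ = wt (sem M) := (wt_eq_lin _).symm
          _ ≤ 1 := sem_wt_le_one M
      cases W <;> simp [K] <;> exact hPr _

lemma Pr_nonneg (s : List Tm) (M : Tm) : 0 ≤ Pr s M := by
  rw [Pr_eq_lin]
  exact lin_nonneg (sem_nonneg M) (fun a => (K_bounds s a).1)

lemma Pr_le_one (s : List Tm) (M : Tm) : Pr s M ≤ 1 := by
  rw [Pr_eq_lin]
  calc lin (K s) (sem M) ≤ lin (fun _ => 1) (sem M) :=
        lin_le_wt (sem_nonneg M) (fun a => (K_bounds s a).2)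
  _ = wt (sem M) := (wt_eq_lin _).symm
  _ ≤ 1 := sem_wt_le_one M

/-- `Pr` at a probabilistic choice of closed affine terms. -/
lemma Pr_choice {A B : Tm} (hA : Affine ∅ A) (hB : Affine ∅ B) (s : List Tm) :
    Pr s (.choice A B) = (1/2 : ℝ) * Pr s A + (1/2 : ℝ) * Pr s B := by
  have hbs : BigStep (.choice A B) ((1/2 : ℝ) • sem A + (1/2 : ℝ) • sem B) :=
    BigStep.choice (total hA) (total hB)
  rw [Pr_eq_lin, sem_eq hbs, map_add, lin_smul, lin_smul, ← Pr_eq_lin, ← Pr_eq_lin]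

/-- `Pr` at an application of closed affine terms. -/
lemma Pr_app {A B : Tm} (hA : Affine ∅ A) (hB : Affine ∅ B) (s : List Tm) :
    Pr s (.app A B) = (sem A).sum fun f p => (sem B).sum fun v q =>
      (p * q) * Pr s (Tm.subst (hv f) v (hb f)) := by
  have hbs : BigStep (.app A B)
      ((sem A).sum fun f p => (sem B).sum fun v q => (p * q) • sem (Tm.subst (hv f) v (hb f))) := by
    apply BigStep.app (total hA) (total hB) (fun f hf => (sem_supp hA f hf).2.2)
    intro f hf v hvv
    have haf := sem_supp hA f hf
    have hav := sem_supp hB v hvv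
    have hbody : Affine {hv f} (hb f) := by
      have := affine_lam_inv (haf.2.2 ▸ haf.1)
      simpa using this
    have : Affine ∅ (Tm.subst (hv f) v (hb f)) := by
      have := subst_affine hbody hav.1 (hv f)
      simpa using this
    exact total this
  rw [Pr_eq_lin, sem_eq hbs, lin_finsupp_sum]
  apply Finsupp.sum_congr
  intro f _
  rw [lin_finsupp_sum]
  apply Finsupp.sum_congr
  intro v _
  rw [lin_smul, ← Pr_eq_lin]

/-- Averaging `Pr` over the values of a closed affine term gives `Pr` of the term. -/
lemma Pr_avg {B : Tm} (hB : Affine ∅ B) (t : List Tm) :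
    ((sem B).sum fun v q => q * Pr t v) = Pr t B := by
  rw [Pr_eq_lin, lin_apply]
  apply Finsupp.sum_congr
  intro v hvv
  rw [Pr_val (sem_supp hB v hvv).2.2]

/-! ### Affine trace representations -/

/-- Total size of a trace. -/
def wtr (s : List Tm) : ℕ := (s.map tsize).sum

/-- `TRep m φ` : the functional `φ` (on closed affine terms) is a subconvex combination
of a constant and trace-acceptance probabilities, with traces of total size at most `m`. -/
def TRep (m : ℕ) (φ : Tm → ℝ) : Prop :=
  ∃ (α : ℝ) (c : List Tm →₀ ℝ),
    0 ≤ α ∧ (∀ t, 0 ≤ c t) ∧ α + lin (fun _ => 1) c ≤ 1 ∧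
    (∀ t ∈ c.support, (∀ V ∈ t, Affine ∅ V) ∧ wtr t ≤ m) ∧
    (∀ P, Affine ∅ P → φ P = α + lin (fun t => Pr t P) c)

lemma trep_mono {m m' : ℕ} {φ : Tm → ℝ} (h : TRep m φ) (hm : m ≤ m') : TRep m' φ := by
  obtain ⟨α, c, h1, h2, h3, h4, h5⟩ := h
  exact ⟨α, c, h1, h2, h3, fun t ht => ⟨(h4 t ht).1, le_trans (h4 t ht).2 hm⟩, h5⟩

lemma trep_congr {m : ℕ} {φ ψ : Tm → ℝ} (h : TRep m φ)
    (he : ∀ P, Affine ∅ P → φ P = ψ P) : TRep m ψ := by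
  obtain ⟨α, c, h1, h2, h3, h4, h5⟩ := h
  exact ⟨α, c, h1, h2, h3, h4, fun P hP => (he P hP) ▸ h5 P hP⟩

lemma trep_const {m : ℕ} {a : ℝ} (h0 : 0 ≤ a) (h1 : a ≤ 1) : TRep m (fun _ => a) :=
  ⟨a, 0, h0, by simp, by simp [h1], by simp, fun P _ => by simp⟩

lemma trep_single {m : ℕ} {s : List Tm} (hs : ∀ V ∈ s, Affine ∅ V) (h : wtr s ≤ m) :
    TRep m (fun P => Pr s P) := by
  refine ⟨0, Finsupp.single s 1, le_refl _, ?_, ?_, ?_, ?_⟩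
  · intro t
    rw [Finsupp.single_apply]
    split <;> norm_num
  · rw [lin_single]; norm_num
  · intro t ht
    rcases Finset.mem_singleton.1 (Finsupp.support_single_subset ht) with rfl
    exact ⟨hs, h⟩
  · intro P _
    rw [lin_single]; ring

/-- Mixing representations by a subprobability distribution. -/
lemma trep_mix {β : Type} (E : β →₀ ℝ) (hE0 : ∀ i, 0 ≤ E i)
    (hE1 : lin (fun _ => 1) E ≤ 1) {m : ℕ} {φ : β → Tm → ℝ}
    (hφ : ∀ i ∈ E.support, TRep m (φ i)) :
    TRep m (fun P => E.sum fun i q => q * φ i P) := by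
  classical
  have H : ∀ i : β, ∃ ac : ℝ × (List Tm →₀ ℝ), i ∈ E.support →
      (0 ≤ ac.1 ∧ (∀ t, 0 ≤ ac.2 t) ∧ ac.1 + lin (fun _ => 1) ac.2 ≤ 1 ∧
       (∀ t ∈ ac.2.support, (∀ V ∈ t, Affine ∅ V) ∧ wtr t ≤ m) ∧
       (∀ P, Affine ∅ P → φ i P = ac.1 + lin (fun t => Pr t P) ac.2)) := by
    intro i
    by_cases hi : i ∈ E.support
    · obtain ⟨α, c, hc⟩ := hφ i hi
      exact ⟨(α, c), fun _ => hc⟩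
    · exact ⟨(0, 0), fun h => absurd h hi⟩
  choose AC hAC using H
  set A : β → ℝ := fun i => (AC i).1 with hA
  set C : β → (List Tm →₀ ℝ) := fun i => (AC i).2 with hC
  refine ⟨E.sum fun i q => q * A i, E.sum fun i q => q • C i, ?_, ?_, ?_, ?_, ?_⟩
  · apply Finset.sum_nonneg
    intro i hi
    exact mul_nonneg (hE0 i) (hAC i hi).1
  · intro t
    rw [Finsupp.sum_apply]
    apply Finset.sum_nonneg
    intro i hi
    simp only [Finsupp.smul_apply, smul_eq_mul]
    exact mul_nonneg (hE0 i) ((hAC i hi).2.1 t)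
  · have hlin : lin (fun _ => (1:ℝ)) (E.sum fun i q => q • C i)
        = ∑ i ∈ E.support, E i * lin (fun _ => (1:ℝ)) (C i) := by
      rw [lin_finsupp_sum, Finsupp.sum]
      exact Finset.sum_congr rfl (fun i _ => lin_smul _ _ _)
    rw [hlin, Finsupp.sum, ← Finset.sum_add_distrib]
    calc ∑ i ∈ E.support, (E i * A i + E i * lin (fun _ => (1:ℝ)) (C i))
        ≤ ∑ i ∈ E.support, E i := by
          apply Finset.sum_le_sum
          intro i hi
          have := (hAC i hi).2.2.1
          have hE := hE0 i
          nlinarith [this]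
      _ = lin (fun _ => (1:ℝ)) E := by
          rw [lin_apply']
          exact Finset.sum_congr rfl (fun i _ => by ring)
      _ ≤ 1 := hE1
  · intro t ht
    rcases Finset.mem_biUnion.1 (Finsupp.support_sum ht) with ⟨i, hi, ht⟩
    exact (hAC i hi).2.2.2.1 t (Finsupp.support_smul ht)
  · intro P hP
    have hlin : lin (fun t => Pr t P) (E.sum fun i q => q • C i)
        = ∑ i ∈ E.support, E i * lin (fun t => Pr t P) (C i) := by
      rw [lin_finsupp_sum, Finsupp.sum]
      exact Finset.sum_congr rfl (fun i _ => lin_smul _ _ _)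
    rw [hlin]
    simp only [Finsupp.sum]
    rw [← Finset.sum_add_distrib]
    apply Finset.sum_congr rfl
    intro i hi
    rw [(hAC i hi).2.2.2.2 P hP]
    ring

/-! ### Sum manipulation helpers -/

lemma wtr_nil : wtr [] = 0 := rfl
lemma wtr_cons (V : Tm) (s : List Tm) : wtr (V :: s) = tsize V + wtr s := by simp [wtr]

lemma lin1_sem (M : Tm) : lin (fun _ => (1:ℝ)) (sem M) ≤ 1 := by
  rw [← wt_eq_lin]; exact sem_wt_le_one M

lemma subst_affine_closed {x : ℕ} {b : Tm} (hb : Affine {x} b) {P : Tm} (hP : Affine ∅ P) :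
    Affine ∅ (Tm.subst x P b) := by
  have := subst_affine hb hP x
  simpa using this

lemma finsupp_sum_swap (D E : TDist) (X : Tm → Tm → ℝ) :
    (D.sum fun f p => E.sum fun v q => (p * q) * X f v)
      = E.sum fun v q => q * D.sum fun f p => p * X f v := by
  simp only [Finsupp.sum]
  rw [Finset.sum_comm]
  apply Finset.sum_congr rfl
  intro v _
  rw [Finset.mul_sum]
  exact Finset.sum_congr rfl (fun f _ => by ring)

lemma finsupp_regroup (D E : TDist) (X : Tm → Tm → ℝ) :
    (D.sum fun f p => E.sum fun v q => (p * q) * X f v)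
      = D.sum fun f p => p * E.sum fun v q => q * X f v := by
  simp only [Finsupp.sum]
  apply Finset.sum_congr rfl
  intro f _
  rw [Finset.mul_sum]
  exact Finset.sum_congr rfl (fun v _ => by ring)

lemma Pr_nil_eq (M : Tm) : Pr [] M = ∑ v ∈ (sem M).support, sem M v := rfl

/-- `Pr` of a cons trace via the applications of the possible values. -/
lemma Pr_cons_app {A : Tm} (hA : Affine ∅ A) (v : Tm) (s : List Tm) :
    Pr (v :: s) A = (sem A).sum fun f p => p * Pr s (Tm.subst (hv f) v (hb f)) := by
  rw [Pr_eq_lin, lin_apply]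
  apply Finsupp.sum_congr
  intro f hf
  congr 1
  conv_lhs => rw [(sem_supp hA f hf).2.2]
  rfl

/-- Averaging an affine representation over the values of a closed term. -/
lemma avg_rep {B' : Tm} (hB' : Affine ∅ B') (α : ℝ) (c : List Tm →₀ ℝ) :
    ((sem B').sum fun v q => q * (α + lin (fun t => Pr t v) c))
      = α * Pr [] B' + c.sum fun t p => p * Pr t B' := by
  have havg : ∀ t, (∑ v ∈ (sem B').support, sem B' v * Pr t v) = Pr t B' := by
    intro t
    have := Pr_avg hB' t
    simpa [Finsupp.sum] using this
  simp only [Finsupp.sum, lin_apply']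
  have expand : ∀ v, sem B' v * (α + ∑ t ∈ c.support, c t * Pr t v)
      = sem B' v * α + ∑ t ∈ c.support, c t * (sem B' v * Pr t v) := by
    intro v
    rw [mul_add, Finset.mul_sum]
    congr 1
    exact Finset.sum_congr rfl (fun t _ => by ring)
  rw [Finset.sum_congr rfl (fun v _ => expand v), Finset.sum_add_distrib]
  congr 1
  · rw [← Finset.sum_mul, Pr_nil_eq]; ring
  · rw [Finset.sum_comm]
    apply Finset.sum_congr rfl
    intro t _
    rw [← Finset.mul_sum, havg t]

/-- Two-fold convex mixing. -/
lemma trep_mix2 {m : ℕ} {p1 p2 : ℝ} (hp1 : 0 ≤ p1) (hp2 : 0 ≤ p2) (hp : p1 + p2 ≤ 1)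
    {φ1 φ2 : Tm → ℝ} (h1 : TRep m φ1) (h2 : TRep m φ2) :
    TRep m (fun P => p1 * φ1 P + p2 * φ2 P) := by
  obtain ⟨α1, c1, a1, b1, m1, s1, e1⟩ := h1
  obtain ⟨α2, c2, a2, b2, m2, s2, e2⟩ := h2
  refine ⟨p1 * α1 + p2 * α2, p1 • c1 + p2 • c2, ?_, ?_, ?_, ?_, ?_⟩
  · positivity
  · intro t
    simp only [Finsupp.add_apply, Finsupp.smul_apply, smul_eq_mul]
    have := b1 t; have := b2 t
    positivity
  · rw [map_add, lin_smul, lin_smul]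
    nlinarith [lin_nonneg (fun t => b1 t) (fun _ => zero_le_one (α := ℝ)) (k := fun _ => (1:ℝ)) (D := c1),
      lin_nonneg (fun t => b2 t) (fun _ => zero_le_one (α := ℝ)) (k := fun _ => (1:ℝ)) (D := c2)]
  · intro t ht
    rcases Finset.mem_union.1 (Finsupp.support_add ht) with ht | ht
    · exact s1 t (Finsupp.support_smul ht)
    · exact s2 t (Finsupp.support_smul ht)
  · intro P hP
    dsimp only
    rw [map_add, lin_smul, lin_smul, e1 P hP, e2 P hP]
    ring

/-! ### The representation theorem -/

theorem main_rep : ∀ n : ℕ, ∀ (b : Tm) (x : ℕ) (s : List Tm),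
    tsize b + wtr s ≤ n → Affine {x} b → (∀ V ∈ s, Affine ∅ V) →
    TRep (wtr s + tsize b) (fun P => Pr s (Tm.subst x P b)) := by
  intro n
  induction n using Nat.strong_induction_on with
  | _ n ih =>
    intro b x s hn hbx hs
    cases b with
    | var y =>
        have hy : y = x := by simpa using affine_var_inv hbx
        subst hy
        apply trep_congr (trep_single hs (by simp [tsize]))
        intro P _
        simp [Tm.subst]
    | omega =>
        apply trep_congr (trep_const (le_refl (0:ℝ)) zero_le_one)
        intro P _
        show (0 : ℝ) = Pr s .omega
        rw [Pr_omega]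
    | lam y B =>
        have hB : Affine (insert y {x}) B := affine_lam_inv hbx
        by_cases hyx : y = x
        · subst hyx
          have hclosed : Affine ∅ (Tm.lam y B) := by
            apply Affine.lam
            have : insert y ({y} : Finset ℕ) = insert y (∅ : Finset ℕ) := by simp
            exact this ▸ hB
          apply trep_congr (trep_const (Pr_nonneg s (.lam y B)) (Pr_le_one s (.lam y B)))
          intro P _
          show Pr s (Tm.lam y B) = Pr s (Tm.subst y P (Tm.lam y B))
          simp [Tm.subst]
        · cases s with
          | nil =>
              apply trep_congr (trep_const (zero_le_one) (le_refl (1:ℝ)))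
              intro P _
              show (1 : ℝ) = Pr [] (Tm.subst x P (Tm.lam y B))
              simp only [Tm.subst, if_neg hyx]
              rw [Pr_lam_nil]
          | cons V s' =>
              have hV : Affine ∅ V := hs V (by simp)
              have hs' : ∀ W ∈ s', Affine ∅ W := fun W hW => hs W (by simp [hW])
              have hB' : Affine {x} (Tm.subst y V B) := by
                have := subst_affine hB hV y
                rwa [Finset.erase_insert (by simpa using hyx)] at this
              have hsz := tsize_subst hB y V
              have hmeas : tsize (Tm.subst y V B) + wtr s' < n := by
                have h1 : tsize (Tm.lam y B) + wtr (V :: s') ≤ n := hn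
                rw [wtr_cons] at h1
                simp only [tsize] at h1 hsz ⊢
                omega
              have := ih _ hmeas (Tm.subst y V B) x s' (le_refl _) hB' hs'
              apply trep_congr (trep_mono this (by
                rw [wtr_cons]
                simp only [tsize] at hsz ⊢
                omega))
              intro P hP
              show Pr s' (Tm.subst x P (Tm.subst y V B)) = Pr (V :: s') (Tm.subst x P (Tm.lam y B))
              simp only [Tm.subst, if_neg hyx]
              rw [Pr_lam_cons]
              rw [subst_comm (Ne.symm hyx) (subst_closed hP) (subst_closed hV)]
    | choice A B =>
        obtain ⟨hA, hB⟩ := affine_choice_inv hbx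
        have hmA : tsize A + wtr s < n := by simp only [tsize] at hn ⊢; omega
        have hmB : tsize B + wtr s < n := by simp only [tsize] at hn ⊢; omega
        have repA := trep_mono (ih _ hmA A x s (le_refl _) hA hs)
          (show wtr s + tsize A ≤ wtr s + tsize (Tm.choice A B) by simp only [tsize]; omega)
        have repB := trep_mono (ih _ hmB B x s (le_refl _) hB hs)
          (show wtr s + tsize B ≤ wtr s + tsize (Tm.choice A B) by simp only [tsize]; omega)
        have hmix := trep_mix2 (p1 := (1/2:ℝ)) (p2 := (1/2:ℝ)) (by norm_num) (by norm_num)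
          (by norm_num) repA repB
        apply trep_congr hmix
        intro P hP
        show (1/2 : ℝ) * Pr s (Tm.subst x P A) + (1/2 : ℝ) * Pr s (Tm.subst x P B)
          = Pr s (Tm.subst x P (Tm.choice A B))
        simp only [Tm.subst]
        rw [Pr_choice (subst_affine_closed hA hP) (subst_affine_closed hB hP)]

    | app A B =>
        obtain ⟨Γ₁, Γ₂, hdis, hun, h1, h2⟩ := affine_app_inv hbx
        have hsub1 : Γ₁ ⊆ {x} := hun ▸ Finset.subset_union_left
        have hsub2 : Γ₂ ⊆ {x} := hun ▸ Finset.subset_union_right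
        rcases Finset.subset_singleton_iff.1 hsub1 with rfl | rfl
        · rcases Finset.subset_singleton_iff.1 hsub2 with rfl | rfl
          · exfalso
            simp only [Finset.empty_union] at hun
            exact Finset.singleton_ne_empty x hun.symm
          · -- hole in the argument position
            have hbody : ∀ f ∈ (sem A).support,
                Affine {hv f} (hb f) ∧ tsize (hb f) + 1 ≤ tsize A := by
              intro f hf
              obtain ⟨haf, hsf, hef⟩ := sem_supp h1 f hf
              constructor
              · have := affine_lam_inv (hef ▸ haf)
                simpa using this
              · have : tsize f = tsize (hb f) + 1 := by
                  conv_lhs => rw [hef]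
                  simp [tsize]
                omega
            have H : ∀ f : Tm, ∃ ac : ℝ × (List Tm →₀ ℝ), f ∈ (sem A).support →
                (0 ≤ ac.1 ∧ (∀ t, 0 ≤ ac.2 t) ∧ ac.1 + lin (fun _ => 1) ac.2 ≤ 1 ∧
                 (∀ t ∈ ac.2.support, (∀ V ∈ t, Affine ∅ V) ∧ wtr t + 1 ≤ wtr s + tsize A) ∧
                 (∀ v, Affine ∅ v →
                   Pr s (Tm.subst (hv f) v (hb f)) = ac.1 + lin (fun t => Pr t v) ac.2)) := by
              intro f
              by_cases hf : f ∈ (sem A).support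
              · obtain ⟨hbf, hszf⟩ := hbody f hf
                have hmeas : tsize (hb f) + wtr s < n := by
                  simp only [tsize] at hn; omega
                obtain ⟨α, c, c1, c2, c3, c4, c5⟩ :=
                  ih _ hmeas (hb f) (hv f) s (le_refl _) hbf hs
                refine ⟨(α, c), fun _ => ⟨c1, c2, c3, ?_, fun v hv' => c5 v hv'⟩⟩
                intro t ht
                exact ⟨(c4 t ht).1, by have := (c4 t ht).2; omega⟩
              · exact ⟨(0, 0), fun h => absurd h hf⟩
            choose AC hAC using H
            set CF : Tm → (List Tm →₀ ℝ) :=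
              fun f => Finsupp.single [] (AC f).1 + (AC f).2 with hCF
            have hCF0 : ∀ f ∈ (sem A).support, ∀ t, 0 ≤ CF f t := by
              intro f hf t
              rw [hCF]
              simp only [Finsupp.add_apply, Finsupp.single_apply]
              have := (hAC f hf).2.1 t
              have := (hAC f hf).1
              split <;> linarith
            have hCF1 : ∀ f ∈ (sem A).support, lin (fun _ => (1:ℝ)) (CF f) ≤ 1 := by
              intro f hf
              rw [hCF]
              simp only [map_add, lin_single, mul_one]
              exact (hAC f hf).2.2.1
            have hCFsupp : ∀ f ∈ (sem A).support, ∀ t ∈ (CF f).support,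
                (∀ V ∈ t, Affine ∅ V) ∧ wtr t + 1 ≤ wtr s + tsize A := by
              intro f hf t ht
              rw [hCF] at ht
              rcases Finset.mem_union.1 (Finsupp.support_add ht) with ht | ht
              · rcases Finset.mem_singleton.1 (Finsupp.support_single_subset ht) with rfl
                refine ⟨by simp, ?_⟩
                rw [wtr_nil]
                have := one_le_tsize A
                omega
              · exact (hAC f hf).2.2.2.1 t ht
            have hχ : ∀ f ∈ (sem A).support, TRep (wtr s + tsize (Tm.app A B))
                (fun P => (CF f).sum fun t q => q * Pr t (Tm.subst x P B)) := by
              intro f hf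
              apply trep_mix (CF f) (hCF0 f hf) (hCF1 f hf)
              intro t ht
              obtain ⟨htaff, htw⟩ := hCFsupp f hf t ht
              have hmeas : tsize B + wtr t < n := by
                simp only [tsize] at hn ⊢; omega
              have := ih _ hmeas B x t (le_refl _) h2 htaff
              apply trep_mono this
              simp only [tsize] at htw ⊢; omega
            have hmix := trep_mix (sem A) (sem_nonneg A) (lin1_sem A) hχ
            apply trep_congr hmix
            intro P hP
            have hB' : Affine ∅ (Tm.subst x P B) := subst_affine_closed h2 hP
            have e0 : Tm.subst x P (Tm.app A B) = Tm.app A (Tm.subst x P B) := by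
              simp only [Tm.subst]
              rw [subst_closed h1 x P]
            rw [e0, Pr_app h1 hB' s, finsupp_regroup]
            apply Finsupp.sum_congr
            intro f hf
            congr 1
            have hkey : ((sem (Tm.subst x P B)).sum fun v q =>
                q * Pr s (Tm.subst (hv f) v (hb f)))
                = (AC f).1 * Pr [] (Tm.subst x P B)
                  + (AC f).2.sum fun t p => p * Pr t (Tm.subst x P B) := by
              rw [← avg_rep hB' (AC f).1 (AC f).2]
              apply Finsupp.sum_congr
              intro v hvv
              congr 1
              exact (hAC f hf).2.2.2.2 v (sem_supp hB' v hvv).1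
            rw [hkey, hCF]
            rw [Finsupp.sum_add_index'
              (fun t => zero_mul (Pr t (Tm.subst x P B)))
              (fun t b1 b2 => add_mul b1 b2 (Pr t (Tm.subst x P B))),
              Finsupp.sum_single_index (zero_mul (Pr [] (Tm.subst x P B)))]
        · rcases Finset.subset_singleton_iff.1 hsub2 with rfl | rfl
          · -- hole in the function position
            have hreps : ∀ v ∈ (sem B).support, TRep (wtr s + tsize (Tm.app A B))
                (fun P => Pr (v :: s) (Tm.subst x P A)) := by
              intro v hvv
              obtain ⟨hva, hvs, -⟩ := sem_supp h2 v hvv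
              have hmeas : tsize A + wtr (v :: s) < n := by
                rw [wtr_cons]
                simp only [tsize] at hn ⊢
                omega
              have := ih _ hmeas A x (v :: s) (le_refl _) h1 (by
                intro W hW
                rcases List.mem_cons.1 hW with rfl | hW
                · exact hva
                · exact hs W hW)
              apply trep_mono this
              rw [wtr_cons]
              simp only [tsize]
              omega
            have hmix := trep_mix (sem B) (sem_nonneg B) (lin1_sem B) hreps
            apply trep_congr hmix
            intro P hP
            have hA' : Affine ∅ (Tm.subst x P A) := subst_affine_closed h1 hP
            have e0 : Tm.subst x P (Tm.app A B) = Tm.app (Tm.subst x P A) B := by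
              simp only [Tm.subst]
              rw [subst_closed h2 x P]
            rw [e0, Pr_app hA' h2 s, finsupp_sum_swap]
            apply Finsupp.sum_congr
            intro v hvv
            congr 1
            exact Pr_cons_app hA' v s
          · exact absurd (Finset.mem_singleton_self x)
              (Finset.disjoint_left.1 hdis (Finset.mem_singleton_self x))

/-! ### From contexts to open terms -/

/-- All variables (free or bound) of a term. -/
def tmVars : Tm → Finset ℕ
  | .var y => {y}
  | .lam y M => insert y (tmVars M)
  | .app M N => tmVars M ∪ tmVars N
  | .choice M N => tmVars M ∪ tmVars N
  | .omega => ∅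

/-- All variables (free or bound) of a context. -/
def ctxVars : Ctx → Finset ℕ
  | .hole => ∅
  | .tm N => tmVars N
  | .lam y C => insert y (ctxVars C)
  | .appL C N => ctxVars C ∪ tmVars N
  | .appR N C => tmVars N ∪ ctxVars C
  | .choiceL C N => ctxVars C ∪ tmVars N
  | .choiceR N C => tmVars N ∪ ctxVars C

lemma subst_id_vars {z : ℕ} {N : Tm} (h : z ∉ tmVars N) (W : Tm) : Tm.subst z W N = N := by
  induction N with
  | var y =>
      simp only [tmVars, Finset.mem_singleton] at h
      simp [Tm.subst, Ne.symm h]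
  | lam y M ih =>
      simp only [tmVars, Finset.mem_insert, not_or] at h
      simp [Tm.subst, Ne.symm h.1, ih h.2]
  | app M N ihM ihN =>
      simp only [tmVars, Finset.mem_union, not_or] at h
      simp [Tm.subst, ihM h.1, ihN h.2]
  | choice M N ihM ihN =>
      simp only [tmVars, Finset.mem_union, not_or] at h
      simp [Tm.subst, ihM h.1, ihN h.2]
  | omega => rfl

lemma fill_var_affine {Γ : Finset ℕ} {C : Ctx} (h : CtxAffine Γ C) {z : ℕ} :
    z ∉ ctxVars C → z ∉ Γ → Affine (insert z Γ) (C.fill (.var z)) := by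
  induction h with
  | hole =>
      intro _ _
      exact Affine.var (Finset.mem_insert_self _ _)
  | tm hN =>
      intro _ _
      exact hN.weaken (Finset.subset_insert _ _)
  | @lam Γ x C hC ih =>
      intro hz1 hz2
      simp only [ctxVars, Finset.mem_insert, not_or] at hz1
      apply Affine.lam
      have := ih hz1.2 (by
        simp only [Finset.mem_insert, not_or]
        exact ⟨hz1.1, hz2⟩)
      exact this.weaken (by
        intro a ha
        rcases Finset.mem_insert.1 ha with rfl | ha
        · exact Finset.mem_insert_of_mem (Finset.mem_insert_self _ _)
        · rcases Finset.mem_insert.1 ha with rfl | ha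
          · exact Finset.mem_insert_self _ _
          · exact Finset.mem_insert_of_mem (Finset.mem_insert_of_mem ha))
  | @appL Γ Δ C N hdis hC hN ih =>
      intro hz1 hz2
      simp only [ctxVars, Finset.mem_union, not_or] at hz1
      simp only [Finset.mem_union, not_or] at hz2
      have hz3 : z ∉ Δ := hz2.2
      have := Affine.app (Γ := insert z Γ) (Δ := Δ)
        (by
          rw [Finset.disjoint_left]
          intro a ha
          rcases Finset.mem_insert.1 ha with rfl | ha
          · exact hz3
          · exact Finset.disjoint_left.1 hdis ha)
        (ih hz1.1 hz2.1) hN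
      have heq : insert z Γ ∪ Δ = insert z (Γ ∪ Δ) := by
        ext a
        simp only [Finset.mem_union, Finset.mem_insert]
        tauto
      exact heq ▸ this
  | @appR Γ Δ N C hdis hN hC ih =>
      intro hz1 hz2
      simp only [ctxVars, Finset.mem_union, not_or] at hz1
      simp only [Finset.mem_union, not_or] at hz2
      have := Affine.app (Γ := Γ) (Δ := insert z Δ)
        (by
          rw [Finset.disjoint_right]
          intro a ha
          rcases Finset.mem_insert.1 ha with rfl | ha
          · exact hz2.1
          · exact Finset.disjoint_right.1 hdis ha)
        hN (ih hz1.2 hz2.2)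
      have heq : Γ ∪ insert z Δ = insert z (Γ ∪ Δ) := by
        ext a
        simp only [Finset.mem_union, Finset.mem_insert]
        tauto
      exact heq ▸ this
  | choiceL hC hN ih =>
      intro hz1 hz2
      simp only [ctxVars, Finset.mem_union, not_or] at hz1
      exact Affine.choice (ih hz1.1 hz2) (hN.weaken (Finset.subset_insert _ _))
  | choiceR hN hC ih =>
      intro hz1 hz2
      simp only [ctxVars, Finset.mem_union, not_or] at hz1
      exact Affine.choice (hN.weaken (Finset.subset_insert _ _)) (ih hz1.2 hz2)

lemma subst_fill {C : Ctx} {z : ℕ} (hz : z ∉ ctxVars C) (M : Tm) :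
    Tm.subst z M (C.fill (.var z)) = C.fill M := by
  induction C with
  | hole => simp [Ctx.fill, Tm.subst]
  | tm N => exact subst_id_vars hz M
  | lam y C ih =>
      simp only [ctxVars, Finset.mem_insert, not_or] at hz
      simp only [Ctx.fill, Tm.subst, if_neg (Ne.symm hz.1)]
      rw [ih hz.2]
  | appL C N ih =>
      simp only [ctxVars, Finset.mem_union, not_or] at hz
      simp only [Ctx.fill, Tm.subst]
      rw [ih hz.1, subst_id_vars hz.2]
  | appR N C ih =>
      simp only [ctxVars, Finset.mem_union, not_or] at hz
      simp only [Ctx.fill, Tm.subst]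
      rw [ih hz.2, subst_id_vars hz.1]
  | choiceL C N ih =>
      simp only [ctxVars, Finset.mem_union, not_or] at hz
      simp only [Ctx.fill, Tm.subst]
      rw [ih hz.1, subst_id_vars hz.2]
  | choiceR N C ih =>
      simp only [ctxVars, Finset.mem_union, not_or] at hz
      simp only [Ctx.fill, Tm.subst]
      rw [ih hz.2, subst_id_vars hz.1]

/-- the context distance is bounded above by the trace distance. -/
theorem deltaCtx_le_deltaTr (M N : Tm) (hM : Affine ∅ M) (hN : Affine ∅ N) :
    deltaCtx M N ≤ deltaTr M N := by
  have hbdd : BddAbove (Set.range fun s : List Tm => |Pr s M - Pr s N|) := by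
    refine ⟨1, ?_⟩
    rintro r ⟨s, rfl⟩
    have h1 := Pr_nonneg s M
    have h2 := Pr_le_one s M
    have h3 := Pr_nonneg s N
    have h4 := Pr_le_one s N
    exact abs_le.2 ⟨by linarith, by linarith⟩
  have hd0 : 0 ≤ deltaTr M N :=
    le_trans (abs_nonneg _) (le_ciSup hbdd ([] : List Tm))
  haveI : Nonempty {C : Ctx // CtxAffine ∅ C} := ⟨⟨.hole, CtxAffine.hole⟩⟩
  rw [deltaCtx]
  apply ciSup_le
  rintro ⟨C, hC⟩
  simp only
  set z := (ctxVars C).sup id + 1 with hzdef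
  have hzfresh : z ∉ ctxVars C := by
    intro hmem
    have h := Finset.le_sup (f := id) hmem
    simp only [id] at h
    omega
  have hbz : Affine {z} (C.fill (.var z)) := by
    have := fill_var_affine hC hzfresh (by simp)
    simpa using this
  obtain ⟨α, c, c1, c2, c3, c4, c5⟩ :=
    main_rep (tsize (C.fill (.var z))) (C.fill (.var z)) z []
      (by rw [wtr_nil]; omega) hbz (by simp)
  have eM : wt (sem (C.fill M)) = α + lin (fun t => Pr t M) c := by
    have h := c5 M hM
    dsimp only at h
    rw [subst_fill hzfresh M] at h
    exact h
  have eN : wt (sem (C.fill N)) = α + lin (fun t => Pr t N) c := by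
    have h := c5 N hN
    dsimp only at h
    rw [subst_fill hzfresh N] at h
    exact h
  rw [eM, eN]
  have hyp : α + lin (fun t => Pr t M) c - (α + lin (fun t => Pr t N) c)
      = lin (fun t => Pr t M) c - lin (fun t => Pr t N) c := by ring
  rw [hyp]
  have hc1 : lin (fun _ => (1:ℝ)) c ≤ 1 := by linarith
  calc |lin (fun t => Pr t M) c - lin (fun t => Pr t N) c|
      = |∑ t ∈ c.support, (c t * Pr t M - c t * Pr t N)| := by
        rw [lin_apply', lin_apply', ← Finset.sum_sub_distrib]
    _ ≤ ∑ t ∈ c.support, |c t * Pr t M - c t * Pr t N| :=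
        Finset.abs_sum_le_sum_abs _ _
    _ = ∑ t ∈ c.support, c t * |Pr t M - Pr t N| := by
        apply Finset.sum_congr rfl
        intro t _
        rw [← mul_sub, abs_mul, abs_of_nonneg (c2 t)]
    _ ≤ ∑ t ∈ c.support, c t * deltaTr M N := by
        apply Finset.sum_le_sum
        intro t _
        exact mul_le_mul_of_nonneg_left (le_ciSup hbdd t) (c2 t)
    _ = (lin (fun _ => (1:ℝ)) c) * deltaTr M N := by
        rw [lin_apply', Finset.sum_mul]
        exact Finset.sum_congr rfl (fun t _ => by ring)
    _ ≤ 1 * deltaTr M N := mul_le_mul_of_nonneg_right hc1 hd0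
    _ = deltaTr M N := one_mul _


end
end
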